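/- arXiv:1704.00573 — 5 statements merged into one kernel-verified Lean document; each statement's English description precedes it below -/
import Mathlib

section
/- Under the observer error dynamics x̃' = -k_{x1}x̃ + Ṽ_x, ỹ' = -k_{y1}ỹ + Ṽ_y, Ṽ_x' = -k_{x2}x̃, Ṽ_y' = -k_{y2}ỹ with initial conditions x̃(t₀)=ỹ(t₀)=0, Ṽ_x(t₀)=V_x, Ṽ_y(t₀)=V_y, and V_x²+V_y² ≤ V_max², the current estimation error satisfies ‖(Ṽ_x(t), Ṽ_y(t))‖ ≤ √(max(k_{x2},k_{y2})/min(k_{x2},k_{y2})) · V_max for all t ≥ t₀. -/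
/-!
The two channels of the observer decouple. In a channel `x' = -k₁ x + V`, `V' = -k₂ x` the
energy `k₂ x² + V²` has derivative `-2 k₁ k₂ x² ≤ 0`, so it never increases; starting from
`x = 0` this gives `V(t)² ≤ V(t₀)²`. Hence the current error never exceeds its initial size,
which is at most `V_max`, and `√(max k₂ / min k₂) ≥ 1`.
-/

section ObserverChannel

variable {k₁ k₂ : ℝ} {x V : ℝ → ℝ}

theorem hasDerivAt_channelEnergy (hx : ∀ t, HasDerivAt x (-k₁ * x t + V t) t)
    (hV : ∀ t, HasDerivAt V (-k₂ * x t) t) (t : ℝ) :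
    HasDerivAt (fun s => k₂ * x s ^ 2 + V s ^ 2) (-2 * k₁ * k₂ * x t ^ 2) t := by
  refine ((((hx t).fun_pow 2).const_mul k₂).add ((hV t).fun_pow 2)).congr_deriv ?_
  push_cast
  ring

theorem antitone_channelEnergy (hk₁ : 0 ≤ k₁) (hk₂ : 0 ≤ k₂)
    (hx : ∀ t, HasDerivAt x (-k₁ * x t + V t) t) (hV : ∀ t, HasDerivAt V (-k₂ * x t) t) :
    Antitone fun s => k₂ * x s ^ 2 + V s ^ 2 :=
  antitone_of_hasDerivAt_nonpos (hasDerivAt_channelEnergy hx hV) fun t => by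
    have : 0 ≤ k₁ * k₂ * x t ^ 2 := by positivity
    simp only [Pi.zero_apply]
    linarith

theorem channel_current_sq_le (hk₁ : 0 ≤ k₁) (hk₂ : 0 ≤ k₂)
    (hx : ∀ t, HasDerivAt x (-k₁ * x t + V t) t) (hV : ∀ t, HasDerivAt V (-k₂ * x t) t)
    {t₀ t : ℝ} (hx₀ : x t₀ = 0) (ht : t₀ ≤ t) :
    V t ^ 2 ≤ V t₀ ^ 2 := by
  have henergy := antitone_channelEnergy hk₁ hk₂ hx hV ht
  simp only [hx₀] at henergy
  have : 0 ≤ k₂ * x t ^ 2 := by positivity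
  linarith

end ObserverChannel

theorem one_le_max_div_min {a b : ℝ} (ha : 0 < a) (hb : 0 < b) : 1 ≤ max a b / min a b :=
  (one_le_div (lt_min ha hb)).2 min_le_max

/-- Under the observer error dynamics with zero initial position errors and
initial current error bounded by `V_max`, the current estimation error remains
bounded by `√(max(k_{x2},k_{y2})/min(k_{x2},k_{y2})) · V_max`. -/
theorem observer_current_error_bound
    (kx1 ky1 kx2 ky2 Vmax t₀ : ℝ) (hkx1 : 0 < kx1) (hky1 : 0 < ky1)
    (hkx2 : 0 < kx2) (hky2 : 0 < ky2) (hVmax : 0 < Vmax)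
    (x y Vx Vy : ℝ → ℝ) (Vx₀ Vy₀ : ℝ)
    (hx : ∀ t, HasDerivAt x (-kx1 * x t + Vx t) t)
    (hy : ∀ t, HasDerivAt y (-ky1 * y t + Vy t) t)
    (hVx : ∀ t, HasDerivAt Vx (-kx2 * x t) t)
    (hVy : ∀ t, HasDerivAt Vy (-ky2 * y t) t)
    (hx0 : x t₀ = 0) (hy0 : y t₀ = 0)
    (hVx0 : Vx t₀ = Vx₀) (hVy0 : Vy t₀ = Vy₀)
    (hV0 : Vx₀ ^ 2 + Vy₀ ^ 2 ≤ Vmax ^ 2) :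
    ∀ t ≥ t₀, Real.sqrt ((Vx t) ^ 2 + (Vy t) ^ 2) ≤
      Real.sqrt (max kx2 ky2 / min kx2 ky2) * Vmax := by
  intro t ht
  have hVx_le := channel_current_sq_le hkx1.le hkx2.le hx hVx hx0 ht
  have hVy_le := channel_current_sq_le hky1.le hky2.le hy hVy hy0 ht
  rw [hVx0] at hVx_le
  rw [hVy0] at hVy_le
  calc Real.sqrt (Vx t ^ 2 + Vy t ^ 2) ≤ Real.sqrt (Vmax ^ 2) :=
        Real.sqrt_le_sqrt (by linarith)
    _ = 1 * Vmax := by rw [Real.sqrt_sq hVmax.le, one_mul]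
    _ ≤ Real.sqrt (max kx2 ky2 / min kx2 ky2) * Vmax := by
        gcongr
        exact Real.one_le_sqrt.2 (one_le_max_div_min hkx2 hky2)
end

section
/- If k_{x2} = k_{y2} in the observer error dynamics with zero initial position errors and initial current error of norm at most V_max, then ‖(Ṽ_x(t), Ṽ_y(t))‖ ≤ V_max for all t; consequently the estimate V̂ = V - Ṽ satisfies ‖V̂(t)‖ ≤ 2V_max, and in particular any projection V̂_N of V̂ onto a unit vector satisfies |V̂_N(t)| ≤ 2V_max. -/
/-!
Each axis of the observer is a damped oscillator on its own: along solutions of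
`p' = -k₁ p + v`, `v' = -k₂ p` the energy `k₂ p² + v²` has derivative `-2 k₁ k₂ p² ≤ 0`.
Starting from `p = 0`, the squared current error on each axis therefore never exceeds its
initial value, so `‖Ṽ(t)‖ ≤ ‖Ṽ(t₀)‖ ≤ V_max`. The triangle inequality gives `‖V - Ṽ‖ ≤ 2 V_max`,
and a projection onto a unit vector is bounded by the norm (Cauchy–Schwarz).
-/

section DampedOscillator

variable {k₁ k₂ : ℝ} {p v : ℝ → ℝ}

lemma antitone_energy_of_hasDerivAt (hk₁ : 0 ≤ k₁) (hk₂ : 0 ≤ k₂)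
    (hp : ∀ t, HasDerivAt p (-k₁ * p t + v t) t) (hv : ∀ t, HasDerivAt v (-k₂ * p t) t) :
    Antitone fun t => k₂ * p t ^ 2 + v t ^ 2 := by
  refine antitone_of_hasDerivAt_nonpos (f' := fun t => -2 * k₁ * k₂ * p t ^ 2)
    (fun t => (((hp t).pow 2).const_mul k₂).add ((hv t).pow 2) |>.congr_deriv ?_) fun t => ?_
  · ring
  · show -2 * k₁ * k₂ * p t ^ 2 ≤ 0
    have : 0 ≤ k₁ * k₂ * p t ^ 2 := by positivity
    linarith

lemma sq_le_sq_of_hasDerivAt_of_eq_zero (hk₁ : 0 ≤ k₁) (hk₂ : 0 ≤ k₂)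
    (hp : ∀ t, HasDerivAt p (-k₁ * p t + v t) t) (hv : ∀ t, HasDerivAt v (-k₂ * p t) t)
    {t₀ t : ℝ} (hp₀ : p t₀ = 0) (ht : t₀ ≤ t) :
    v t ^ 2 ≤ v t₀ ^ 2 := by
  have hE := antitone_energy_of_hasDerivAt hk₁ hk₂ hp hv ht
  simp only [hp₀] at hE
  nlinarith [mul_nonneg hk₂ (sq_nonneg (p t))]

end DampedOscillator

lemma sqrt_sub_sq_add_sub_sq_le (a b c d : ℝ) :
    √((a - c) ^ 2 + (b - d) ^ 2) ≤ √(a ^ 2 + b ^ 2) + √(c ^ 2 + d ^ 2) := by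
  simpa only [Complex.norm_eq_sqrt_sq_add_sq, Complex.sub_re, Complex.sub_im] using
    norm_sub_le (⟨a, b⟩ : ℂ) ⟨c, d⟩

lemma abs_neg_mul_sin_add_mul_cos_le (a b γ : ℝ) :
    |-a * Real.sin γ + b * Real.cos γ| ≤ √(a ^ 2 + b ^ 2) :=
  Real.abs_le_sqrt <| by
    nlinarith [sq_nonneg (a * Real.cos γ + b * Real.sin γ), Real.sin_sq_add_cos_sq γ]

theorem observer_estimate_bound_general
    (kx1 ky1 kx2 ky2 Vmax t₀ : ℝ) (hkx1 : 0 < kx1) (hky1 : 0 < ky1)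
    (hkx2 : 0 < kx2) (hky2 : 0 < ky2)
    (x y Vtx Vty : ℝ → ℝ) (VX VY : ℝ)
    (hx : ∀ t, HasDerivAt x (-kx1 * x t + Vtx t) t)
    (hy : ∀ t, HasDerivAt y (-ky1 * y t + Vty t) t)
    (hVx : ∀ t, HasDerivAt Vtx (-kx2 * x t) t)
    (hVy : ∀ t, HasDerivAt Vty (-ky2 * y t) t)
    (hx0 : x t₀ = 0) (hy0 : y t₀ = 0)
    (hV0 : Real.sqrt ((Vtx t₀) ^ 2 + (Vty t₀) ^ 2) ≤ Vmax)
    (hV : Real.sqrt (VX ^ 2 + VY ^ 2) ≤ Vmax) :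
    ∀ t ≥ t₀,
      Real.sqrt ((Vtx t) ^ 2 + (Vty t) ^ 2) ≤ Vmax ∧
      Real.sqrt ((VX - Vtx t) ^ 2 + (VY - Vty t) ^ 2) ≤ 2 * Vmax ∧
      ∀ γ : ℝ, |(-(VX - Vtx t)) * Real.sin γ + (VY - Vty t) * Real.cos γ| ≤ 2 * Vmax := by
  intro t ht
  have hVt : √(Vtx t ^ 2 + Vty t ^ 2) ≤ Vmax :=
    (Real.sqrt_le_sqrt <| add_le_add
      (sq_le_sq_of_hasDerivAt_of_eq_zero hkx1.le hkx2.le hx hVx hx0 ht)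
      (sq_le_sq_of_hasDerivAt_of_eq_zero hky1.le hky2.le hy hVy hy0 ht)).trans hV0
  have hVhat : √((VX - Vtx t) ^ 2 + (VY - Vty t) ^ 2) ≤ 2 * Vmax := by
    linarith [sqrt_sub_sq_add_sub_sq_le VX VY (Vtx t) (Vty t)]
  exact ⟨hVt, hVhat, fun γ => (abs_neg_mul_sin_add_mul_cos_le _ _ γ).trans hVhat⟩

/-- If `k_{x2} = k_{y2}`, with zero initial position errors and initial current
error of norm at most `V_max`, then the current estimation error stays bounded
by `V_max`; consequently the estimate `V̂ = V - Ṽ` satisfies `‖V̂‖ ≤ 2V_max`,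
and any projection of `V̂` onto a unit direction is bounded by `2V_max`. -/
theorem observer_estimate_bound
    (kx1 ky1 kx2 ky2 Vmax t₀ : ℝ) (hkx1 : 0 < kx1) (hky1 : 0 < ky1)
    (hkx2 : 0 < kx2) (hky2 : 0 < ky2) (hkeq : kx2 = ky2) (hVmax : 0 < Vmax)
    (x y Vtx Vty : ℝ → ℝ) (VX VY : ℝ)
    (hx : ∀ t, HasDerivAt x (-kx1 * x t + Vtx t) t)
    (hy : ∀ t, HasDerivAt y (-ky1 * y t + Vty t) t)
    (hVx : ∀ t, HasDerivAt Vtx (-kx2 * x t) t)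
    (hVy : ∀ t, HasDerivAt Vty (-ky2 * y t) t)
    (hx0 : x t₀ = 0) (hy0 : y t₀ = 0)
    (hV0 : Real.sqrt ((Vtx t₀) ^ 2 + (Vty t₀) ^ 2) ≤ Vmax)
    (hV : Real.sqrt (VX ^ 2 + VY ^ 2) ≤ Vmax) :
    ∀ t ≥ t₀,
      Real.sqrt ((Vtx t) ^ 2 + (Vty t) ^ 2) ≤ Vmax ∧
      Real.sqrt ((VX - Vtx t) ^ 2 + (VY - Vty t) ^ 2) ≤ 2 * Vmax ∧
      ∀ γ : ℝ, |(-(VX - Vtx t)) * Real.sin γ + (VY - Vty t) * Real.cos γ| ≤ 2 * Vmax :=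
  observer_estimate_bound_general kx1 ky1 kx2 ky2 Vmax t₀ hkx1 hky1 hkx2 hky2 x y Vtx Vty VX VY hx
    hy hVx hVy hx0 hy0 hV0 hV
end

section
/- Consider ẏ = -u_td · y/√(Δ² + (y+g)²) with u_td > 0, Δ > 0, and g a bounded continuous function of time (|g(t)| ≤ G). The origin y = 0 is globally asymptotically stable and locally exponentially stable: for every initial condition y(0), there exist α > 0 (depending on |y(0)|, G, Δ, u_td) such that |y(t)| ≤ |y(0)|e^{-αt}. -/
/-! Write the equation as `ẏ = -k(t) y` with `k(t) = u_td / √(Δ² + (y + g)²) > 0`. Then `y²` is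
nonincreasing, so `|y(t)| ≤ |y(0)|` for `t ≥ 0`; with `|g| ≤ G` this bounds the denominator by
`M = √(Δ² + (|y(0)| + G)²)`, hence `k ≥ α := u_td / M` on `[0, ∞)`, and then `e^{2αt} y²` is
nonincreasing there. -/

open Real Set

section DecayOfLinearODE

variable {k y : ℝ → ℝ} {α : ℝ}

theorem antitoneOn_exp_mul_sq_of_hasDerivAt (hy : ∀ t, HasDerivAt y (-k t * y t) t)
    (hk : ∀ t ≥ 0, α ≤ k t) : AntitoneOn (fun t => exp (2 * α * t) * y t ^ 2) (Ici 0) := by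
  have hderiv : ∀ t, HasDerivAt (fun t => exp (2 * α * t) * y t ^ 2)
      (2 * exp (2 * α * t) * (α - k t) * y t ^ 2) t := by
    intro t
    have hexp := ((hasDerivAt_id t).const_mul (2 * α)).exp
    refine (hexp.mul ((hy t).pow 2)).congr_deriv ?_
    simp only [id, mul_one, Pi.pow_apply]
    ring
  refine antitoneOn_of_hasDerivWithinAt_nonpos (convex_Ici 0)
    (fun t _ => (hderiv t).continuousAt.continuousWithinAt)
    (fun t _ => (hderiv t).hasDerivWithinAt) fun t ht => ?_
  rw [interior_Ici] at ht
  have hαk : α - k t ≤ 0 := sub_nonpos.mpr (hk t (le_of_lt ht))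
  have hexp : 0 ≤ 2 * exp (2 * α * t) := by positivity
  exact mul_nonpos_of_nonpos_of_nonneg (mul_nonpos_of_nonneg_of_nonpos hexp hαk) (sq_nonneg _)

theorem abs_le_mul_exp_of_hasDerivAt (hy : ∀ t, HasDerivAt y (-k t * y t) t)
    (hk : ∀ t ≥ 0, α ≤ k t) {t : ℝ} (ht : 0 ≤ t) : |y t| ≤ |y 0| * exp (-α * t) := by
  have hdecay := antitoneOn_exp_mul_sq_of_hasDerivAt hy hk self_mem_Ici (mem_Ici.mpr ht) ht
  simp only [mul_zero, exp_zero, one_mul] at hdecay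
  have hsq : (exp (α * t) * |y t|) ^ 2 ≤ |y 0| ^ 2 := by
    calc (exp (α * t) * |y t|) ^ 2 = exp (2 * α * t) * y t ^ 2 := by
          rw [mul_pow, sq_abs, ← exp_nat_mul, Nat.cast_two, mul_assoc]
      _ ≤ |y 0| ^ 2 := (sq_abs (y 0)).symm ▸ hdecay
  have hscaled := (pow_le_pow_iff_left₀ (by positivity) (abs_nonneg _) two_ne_zero).mp hsq
  calc |y t| = exp (-α * t) * (exp (α * t) * |y t|) := by
        rw [← mul_assoc, ← exp_add, neg_mul, neg_add_cancel, exp_zero, one_mul]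
    _ ≤ exp (-α * t) * |y 0| := mul_le_mul_of_nonneg_left hscaled (exp_nonneg _)
    _ = |y 0| * exp (-α * t) := mul_comm _ _

end DecayOfLinearODE

theorem crosstrack_nominal_exponential_general
    (utd Δ G : ℝ) (hutd : 0 < utd) (hΔ : 0 < Δ)
    (g : ℝ → ℝ) (hgb : ∀ t, |g t| ≤ G)
    (y : ℝ → ℝ)
    (hy : ∀ t, HasDerivAt y (-utd * y t / Real.sqrt (Δ ^ 2 + (y t + g t) ^ 2)) t) :
    ∃ α > 0, ∀ t ≥ 0, |y t| ≤ |y 0| * Real.exp (-α * t) := by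
  have hlin : ∀ t, HasDerivAt y (-(utd / √(Δ ^ 2 + (y t + g t) ^ 2)) * y t) t :=
    fun t => (hy t).congr_deriv (by ring)
  have hbounded : ∀ t ≥ 0, |y t| ≤ |y 0| := fun t ht => by
    simpa using abs_le_mul_exp_of_hasDerivAt (α := 0) hlin (fun s _ => by positivity) ht
  refine ⟨utd / √(Δ ^ 2 + (|y 0| + G) ^ 2), by positivity,
    fun t ht => abs_le_mul_exp_of_hasDerivAt hlin (fun s hs => ?_) ht⟩
  have hsum : |y s + g s| ≤ |y 0| + G := (abs_add_le _ _).trans (add_le_add (hbounded s hs) (hgb s))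
  have hsq : (y s + g s) ^ 2 ≤ (|y 0| + G) ^ 2 := sq_le_sq' (abs_le.mp hsum).1 (abs_le.mp hsum).2
  exact div_le_div_of_nonneg_left hutd.le (by positivity) (sqrt_le_sqrt (by linarith))

/-- For `ẏ = -u_td·y/√(Δ² + (y+g(t))²)` with `u_td, Δ > 0` and `g` continuous
and bounded, the origin is globally asymptotically and locally exponentially
stable: each solution decays exponentially from its initial value. -/
theorem crosstrack_nominal_exponential
    (utd Δ G : ℝ) (hutd : 0 < utd) (hΔ : 0 < Δ) (hG : 0 ≤ G)
    (g : ℝ → ℝ) (hgc : Continuous g) (hgb : ∀ t, |g t| ≤ G)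
    (y : ℝ → ℝ)
    (hy : ∀ t, HasDerivAt y (-utd * y t / Real.sqrt (Δ ^ 2 + (y t + g t) ^ 2)) t) :
    ∃ α > 0, ∀ t ≥ 0, |y t| ≤ |y 0| * Real.exp (-α * t) :=
  crosstrack_nominal_exponential_general utd Δ G hutd hΔ g hgb y hy
end

section
/- With the augmented update law θ̇ = (u_t cos(χ-γ(θ)) + V̂_T + k_δ x_{b/p})/(1 - κ(θ)y_{b/p}), the along-track error satisfies ẋ_{b/p} = -k_δ x_{b/p} + Ṽ_T, where Ṽ_T = V_T - V̂_T. If Ṽ_T(t) → 0 exponentially with rate λ and k_δ > 0, then x_{b/p}(t) → 0 exponentially. -/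
/-! Multiplying by the integrating factor `exp (kδ t)` turns `ẋ = -kδ x + Ṽ_T` into
`d/dt (exp (kδ t) x) = exp (kδ t) Ṽ_T`, whose size is at most `C exp ((kδ - lam) t)`.
For any rate `α < kδ` with `α ≤ lam` this is dominated by the derivative of
`|x 0| + C / (kδ - α) · exp ((kδ - α) t)`, and dividing the resulting fence back by
`exp (kδ t)` gives decay at rate `α`. -/

open Real Set

theorem hasDerivAt_exp_mul_mul_of_hasDerivAt_neg_mul_add {x : ℝ → ℝ} {k a t : ℝ}
    (hx : HasDerivAt x (-k * x t + a) t) :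
    HasDerivAt (fun s => exp (k * s) * x s) (exp (k * t) * a) t := by
  have hexp : HasDerivAt (fun s => exp (k * s)) (exp (k * t) * k) t :=
    ((hasDerivAt_id t).const_mul k).exp.congr_deriv (by simp)
  exact (hexp.mul hx).congr_deriv (by ring)

theorem abs_le_mul_exp_of_hasDerivAt_neg_mul_add {x f : ℝ → ℝ} {k lam C α : ℝ}
    (hαk : α < k) (hαlam : α ≤ lam)
    (hx : ∀ t, HasDerivAt x (-k * x t + f t) t)
    (hf : ∀ t ≥ 0, |f t| ≤ C * exp (-lam * t)) :
    ∀ t ≥ 0, |x t| ≤ (|x 0| + C / (k - α)) * exp (-α * t) := by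
  intro t ht
  set β := k - α with hβ
  have hβpos : 0 < β := sub_pos.mpr hαk
  have hC : 0 ≤ C := by simpa using (abs_nonneg _).trans (hf 0 le_rfl)
  have hCβ : 0 ≤ C / β := div_nonneg hC hβpos.le
  have hh := fun s => hasDerivAt_exp_mul_mul_of_hasDerivAt_neg_mul_add (hx s)
  have hB : ∀ s, HasDerivAt (fun s => |x 0| + C / β * exp (β * s)) (C * exp (β * s)) s :=
    fun s => ((((hasDerivAt_id s).const_mul β).exp.const_mul (C / β)).const_add _).congr_deriv
      (by field_simp; simp)
  have hbound : ∀ s ∈ Ico 0 t, ‖exp (k * s) * f s‖ ≤ C * exp (β * s) := by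
    intro s hs
    calc ‖exp (k * s) * f s‖ = exp (k * s) * |f s| := by
          rw [Real.norm_eq_abs, abs_mul, abs_of_pos (exp_pos _)]
      _ ≤ exp (k * s) * (C * exp (-lam * s)) :=
          mul_le_mul_of_nonneg_left (hf s hs.1) (exp_pos _).le
      _ = C * exp ((k - lam) * s) := by rw [mul_left_comm, ← exp_add]; ring_nf
      _ ≤ C * exp (β * s) := by gcongr; exacts [hs.1, by linarith]
  have hfence := image_norm_le_of_norm_deriv_right_le_deriv_boundary
    (fun s _ => (hh s).continuousAt.continuousWithinAt) (fun s _ => (hh s).hasDerivWithinAt)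
    (by simpa using hCβ) hB hbound ⟨ht, le_rfl⟩
  have hxt : |x t| = exp (-(k * t)) * ‖exp (k * t) * x t‖ := by
    rw [Real.norm_eq_abs, abs_mul, abs_of_pos (exp_pos _), ← mul_assoc, ← exp_add]; simp
  have hexp_le : exp (-(k * t)) ≤ exp (-α * t) := exp_le_exp.mpr (by nlinarith)
  calc |x t| ≤ exp (-(k * t)) * (|x 0| + C / β * exp (β * t)) := by
        rw [hxt]; exact mul_le_mul_of_nonneg_left hfence (exp_pos _).le
    _ = |x 0| * exp (-(k * t)) + C / β * exp (-α * t) := by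
        rw [mul_add, mul_left_comm, ← exp_add, hβ]; ring_nf
    _ ≤ (|x 0| + C / β) * exp (-α * t) := by
        rw [add_mul]; gcongr

theorem along_track_exponential_general
    (ut χ VT VThat yb : ℝ → ℝ) (κ γ : ℝ → ℝ) (θ x dθ : ℝ → ℝ) (kδ : ℝ)
    (hkδ : 0 < kδ)
    (hden : ∀ t, 1 - κ (θ t) * yb t ≠ 0)
    (hθ : ∀ t, dθ t =
      (ut t * Real.cos (χ t - γ (θ t)) + VThat t + kδ * x t) / (1 - κ (θ t) * yb t))
    (hx : ∀ t, HasDerivAt x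
      (-(dθ t) * (1 - κ (θ t) * yb t) + ut t * Real.cos (χ t - γ (θ t)) + VT t) t)
    (C lam : ℝ) (hlam : 0 < lam)
    (hdecay : ∀ t ≥ 0, |VT t - VThat t| ≤ C * Real.exp (-lam * t)) :
    (∀ t, HasDerivAt x (-kδ * x t + (VT t - VThat t)) t) ∧
    ∃ M α, 0 < α ∧ ∀ t ≥ 0, |x t| ≤ M * Real.exp (-α * t) := by
  have hx' : ∀ t, HasDerivAt x (-kδ * x t + (VT t - VThat t)) t := by
    intro t
    have hclosed : -(dθ t) * (1 - κ (θ t) * yb t) + ut t * Real.cos (χ t - γ (θ t)) + VT t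
        = -kδ * x t + (VT t - VThat t) := by
      rw [hθ t, neg_mul, div_mul_cancel₀ _ (hden t)]; ring
    exact hclosed ▸ hx t
  have hmin : 0 < min kδ lam := lt_min hkδ hlam
  exact ⟨hx', _, min kδ lam / 2, by positivity,
    abs_le_mul_exp_of_hasDerivAt_neg_mul_add (by linarith [min_le_left kδ lam])
      (by linarith [min_le_right kδ lam]) hx' hdecay⟩

/-- With the augmented update law
`θ̇ = (u_t cos(χ-γ(θ)) + V̂_T + k_δ x_{b/p})/(1 - κ(θ)y_{b/p})`, the along-track
error satisfies `ẋ = -k_δ x + Ṽ_T`; if `Ṽ_T → 0` exponentially and `k_δ > 0`,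
then `x → 0` exponentially. -/
theorem along_track_exponential
    (ut χ VT VThat yb : ℝ → ℝ) (κ γ : ℝ → ℝ) (θ x dθ : ℝ → ℝ) (kδ : ℝ)
    (hkδ : 0 < kδ)
    (hden : ∀ t, 1 - κ (θ t) * yb t ≠ 0)
    (hθ : ∀ t, dθ t =
      (ut t * Real.cos (χ t - γ (θ t)) + VThat t + kδ * x t) / (1 - κ (θ t) * yb t))
    (hx : ∀ t, HasDerivAt x
      (-(dθ t) * (1 - κ (θ t) * yb t) + ut t * Real.cos (χ t - γ (θ t)) + VT t) t)
    (C lam : ℝ) (hC : 0 ≤ C) (hlam : 0 < lam)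
    (hdecay : ∀ t ≥ 0, |VT t - VThat t| ≤ C * Real.exp (-lam * t)) :
    (∀ t, HasDerivAt x (-kδ * x t + (VT t - VThat t)) t) ∧
    ∃ M α, 0 < α ∧ ∀ t ≥ 0, |x t| ≤ M * Real.exp (-α * t) :=
  along_track_exponential_general ut χ VT VThat yb κ γ θ x dθ kδ hkδ hden hθ hx C lam hlam hdecay
end

section
/- Consider the time-varying system ψ̃' = C_r(t)r̃, r̃' = -k₁r̃ - k₂C_r(t)ψ̃ with k₁, k₂ > 0 and C_r continuous satisfying 0 < c ≤ C_r(t) ≤ C for all t. Then r̃(t) → 0 as t → ∞, and consequently ψ̃(t) → 0; i.e., the origin is globally asymptotically stable. -/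
/-!
The energy `k₂ψ̃² + r̃²` only dissipates in `r̃`; perturbing it by a small cross term gives the
strict Lyapunov function `V = k₂ψ̃² + r̃² + 2εψ̃r̃`. Along solutions the cross term contributes
`-2εk₂C_r ψ̃² ≤ -2εk₂c ψ̃²`, which is where the lower bound on `C_r` enters, so for small `ε > 0`
the function `V` is equivalent to `ψ̃² + r̃²` and satisfies `V̇ ≤ -αV`. Hence `V` decays
exponentially, and with it `ψ̃` and `r̃`.
-/

open Filter Topology Real

theorem le_mul_exp_neg_of_hasDerivAt_le_neg_mul {V V' : ℝ → ℝ} {α : ℝ}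
    (hV : ∀ t, HasDerivAt V (V' t) t) (hV' : ∀ t, V' t ≤ -α * V t) {t : ℝ} (ht : 0 ≤ t) :
    V t ≤ V 0 * exp (-(α * t)) := by
  have hanti : Antitone fun s => V s * exp (α * s) := by
    refine antitone_of_hasDerivAt_nonpos
      (fun s => (hV s).mul (((hasDerivAt_id s).const_mul α).exp)) fun s => ?_
    have := mul_le_mul_of_nonneg_right (hV' s) (exp_pos (α * s)).le
    simp only [id, mul_one, Pi.zero_apply]
    linarith
  calc V t = V t * exp (α * t) * exp (-(α * t)) := by rw [mul_assoc, ← exp_add]; simp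
    _ ≤ V 0 * exp (-(α * t)) := by
      gcongr
      simpa using hanti ht

theorem tendsto_zero_of_hasDerivAt_le_neg_mul {V V' : ℝ → ℝ} {α : ℝ} (hα : 0 < α)
    (hV : ∀ t, HasDerivAt V (V' t) t) (hV' : ∀ t, V' t ≤ -α * V t) (hV₀ : ∀ t, 0 ≤ V t) :
    Tendsto V atTop (𝓝 0) := by
  have hexp : Tendsto (fun t => V 0 * exp (-(α * t))) atTop (𝓝 0) := by
    simpa using (tendsto_exp_neg_atTop_nhds_zero.comp
      (tendsto_id.const_mul_atTop hα)).const_mul (V 0)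
  exact tendsto_of_tendsto_of_tendsto_of_le_of_le' tendsto_const_nhds hexp
    (Eventually.of_forall hV₀)
    ((eventually_ge_atTop 0).mono fun t ht => le_mul_exp_neg_of_hasDerivAt_le_neg_mul hV hV' ht)

theorem tendsto_zero_of_mul_sq_le {ι : Type*} {l : Filter ι} {f g : ι → ℝ} {m : ℝ} (hm : 0 < m)
    (hfg : ∀ i, m * f i ^ 2 ≤ g i) (hg : Tendsto g l (𝓝 0)) : Tendsto f l (𝓝 0) := by
  refine squeeze_zero_norm (a := fun i => √(g i / m)) (fun i => ?_) ?_
  · rw [Real.norm_eq_abs]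
    exact Real.abs_le_sqrt ((le_div_iff₀' hm).2 (hfg i))
  · simpa using (hg.div_const m).sqrt

def yawLyapunov (k₂ ε x y : ℝ) : ℝ := k₂ * x ^ 2 + y ^ 2 + 2 * ε * (x * y)

section yawLyapunov

variable {k₁ k₂ c C ε x y : ℝ}

theorem yawLyapunov_le (hk₂ : 0 ≤ k₂) (hε : 0 ≤ ε) :
    yawLyapunov k₂ ε x y ≤ (k₂ + 1 + ε) * (x ^ 2 + y ^ 2) := by
  unfold yawLyapunov
  nlinarith [mul_nonneg hε (sq_nonneg (x - y)), mul_nonneg hk₂ (sq_nonneg y)]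

theorem mul_le_yawLyapunov (hεk₂ : ε ≤ k₂ / 2) (hε₁ : ε ≤ 1 / 2) (hε : 0 ≤ ε) :
    ε * (x ^ 2 + y ^ 2) ≤ yawLyapunov k₂ ε x y := by
  unfold yawLyapunov
  nlinarith [mul_nonneg hε (sq_nonneg (x + y)), mul_nonneg (sub_nonneg.2 hεk₂) (sq_nonneg x),
    mul_nonneg (sub_nonneg.2 hε₁) (sq_nonneg y)]

theorem hasDerivAt_yawLyapunov {x y : ℝ → ℝ} {x' y' t : ℝ} (hx : HasDerivAt x x' t)
    (hy : HasDerivAt y y' t) :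
    HasDerivAt (fun s => yawLyapunov k₂ ε (x s) (y s))
      (2 * k₂ * x t * x' + 2 * y t * y' + 2 * ε * (x' * y t + x t * y')) t := by
  unfold yawLyapunov
  refine ((((hx.fun_pow 2).const_mul k₂).fun_add (hy.fun_pow 2)).fun_add
    ((hx.fun_mul hy).const_mul (2 * ε))).congr_deriv ?_
  norm_num
  ring

theorem yawLyapunov_flow_deriv_le {a : ℝ} (hk₂ : 0 < k₂) (hc : 0 < c) (hε : 0 ≤ ε)
    (hgain : ε * (2 * C * k₂ * c + k₁ ^ 2) ≤ k₁ * k₂ * c) (hca : c ≤ a) (haC : a ≤ C) :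
    2 * k₂ * x * (a * y) + 2 * y * (-k₁ * y - k₂ * a * x) +
        2 * ε * (a * y * y + x * (-k₁ * y - k₂ * a * x)) ≤
      -(k₁ * y ^ 2 + ε * k₂ * c * x ^ 2) := by
  have hkc : 0 < k₂ * c := mul_pos hk₂ hc
  -- Young's inequality `2k₁|xy| ≤ k₂c x² + k₁²/(k₂c) y²` absorbs the indefinite term.
  refine le_of_mul_le_mul_left ?_ hkc
  nlinarith [mul_nonneg hε (sq_nonneg (k₂ * c * x + k₁ * y)),
    mul_nonneg (mul_nonneg hkc.le hε) (mul_nonneg (sub_nonneg.2 haC) (sq_nonneg y)),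
    mul_nonneg (mul_nonneg (mul_nonneg hkc.le hk₂.le) hε)
      (mul_nonneg (sub_nonneg.2 hca) (sq_nonneg x)),
    mul_nonneg (sub_nonneg.2 hgain) (sq_nonneg y)]

theorem yawLyapunov_flow_deriv_le_neg_mul {a : ℝ} (hk₁ : 0 ≤ k₁) (hk₂ : 0 < k₂) (hc : 0 < c)
    (hε : 0 ≤ ε) (hgain : ε * (2 * C * k₂ * c + k₁ ^ 2) ≤ k₁ * k₂ * c) (hca : c ≤ a)
    (haC : a ≤ C) :
    2 * k₂ * x * (a * y) + 2 * y * (-k₁ * y - k₂ * a * x) +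
        2 * ε * (a * y * y + x * (-k₁ * y - k₂ * a * x)) ≤
      -(min k₁ (ε * k₂ * c) / (k₂ + 1 + ε)) * yawLyapunov k₂ ε x y := by
  set μ := min k₁ (ε * k₂ * c)
  have hK : 0 < k₂ + 1 + ε := by positivity
  calc _ ≤ -(k₁ * y ^ 2 + ε * k₂ * c * x ^ 2) :=
        yawLyapunov_flow_deriv_le hk₂ hc hε hgain hca haC
    _ ≤ -(μ / (k₂ + 1 + ε) * ((k₂ + 1 + ε) * (x ^ 2 + y ^ 2))) := by
      rw [← mul_assoc, div_mul_cancel₀ _ hK.ne']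
      nlinarith [mul_le_mul_of_nonneg_right (min_le_left k₁ (ε * k₂ * c)) (sq_nonneg y),
        mul_le_mul_of_nonneg_right (min_le_right k₁ (ε * k₂ * c)) (sq_nonneg x)]
    _ ≤ -(μ / (k₂ + 1 + ε)) * yawLyapunov k₂ ε x y := by
      rw [neg_mul, neg_le_neg_iff]
      gcongr
      exact yawLyapunov_le hk₂.le hε

end yawLyapunov

theorem yaw_error_asymptotic_stability_general
    (k₁ k₂ c C : ℝ) (hk₁ : 0 < k₁) (hk₂ : 0 < k₂) (hc : 0 < c)
    (Cr ψ r : ℝ → ℝ)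
    (hbnd : ∀ t, c ≤ Cr t ∧ Cr t ≤ C)
    (hψ : ∀ t, HasDerivAt ψ (Cr t * r t) t)
    (hr : ∀ t, HasDerivAt r (-k₁ * r t - k₂ * Cr t * ψ t) t) :
    Filter.Tendsto r Filter.atTop (nhds 0) ∧
    Filter.Tendsto ψ Filter.atTop (nhds 0) := by
  -- The constraints on `ε` are open and hold at `ε = 0`.
  obtain ⟨ε, ⟨hεk₂, hε₁, hgain⟩, hε⟩ : ∃ ε : ℝ, (ε < k₂ / 2 ∧ ε < 1 / 2 ∧
      ε * (2 * C * k₂ * c + k₁ ^ 2) < k₁ * k₂ * c) ∧ 0 < ε := by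
    have h₀ : Tendsto (fun ε : ℝ => ε) (𝓝[>] 0) (𝓝 0) := nhdsWithin_le_nhds
    refine ((h₀.eventually_lt_const (by positivity)).and
      ((h₀.eventually_lt_const (by positivity)).and ((h₀.mul_const _).eventually_lt_const ?_))).and
      self_mem_nhdsWithin |>.exists
    simpa using mul_pos (mul_pos hk₁ hk₂) hc
  set V := fun t => yawLyapunov k₂ ε (ψ t) (r t)
  have hcoercive : ∀ t, ε * (ψ t ^ 2 + r t ^ 2) ≤ V t := fun t =>
    mul_le_yawLyapunov hεk₂.le hε₁.le hε.le
  have hV : Tendsto V atTop (𝓝 0) :=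
    tendsto_zero_of_hasDerivAt_le_neg_mul (by positivity)
      (fun t => hasDerivAt_yawLyapunov (hψ t) (hr t))
      (fun t => yawLyapunov_flow_deriv_le_neg_mul hk₁.le hk₂ hc hε.le hgain.le (hbnd t).1
        (hbnd t).2)
      (fun t => (by positivity : 0 ≤ ε * (ψ t ^ 2 + r t ^ 2)).trans (hcoercive t))
  refine ⟨tendsto_zero_of_mul_sq_le hε (fun t => ?_) hV,
    tendsto_zero_of_mul_sq_le hε (fun t => ?_) hV⟩ <;>
    nlinarith [hcoercive t, mul_nonneg hε.le (sq_nonneg (ψ t)), mul_nonneg hε.le (sq_nonneg (r t))]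

/-- For `ψ̃' = C_r(t)r̃`, `r̃' = -k₁r̃ - k₂C_r(t)ψ̃` with `k₁, k₂ > 0` and
`0 < c ≤ C_r(t) ≤ C`, both `r̃` and `ψ̃` converge to zero. -/
theorem yaw_error_asymptotic_stability
    (k₁ k₂ c C : ℝ) (hk₁ : 0 < k₁) (hk₂ : 0 < k₂) (hc : 0 < c)
    (Cr ψ r : ℝ → ℝ) (hCr : Continuous Cr)
    (hbnd : ∀ t, c ≤ Cr t ∧ Cr t ≤ C)
    (hψ : ∀ t, HasDerivAt ψ (Cr t * r t) t)
    (hr : ∀ t, HasDerivAt r (-k₁ * r t - k₂ * Cr t * ψ t) t) :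
    Filter.Tendsto r Filter.atTop (nhds 0) ∧
    Filter.Tendsto ψ Filter.atTop (nhds 0) :=
  yaw_error_asymptotic_stability_general k₁ k₂ c C hk₁ hk₂ hc Cr ψ r hbnd hψ hr
end
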